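/- arXiv:2209.04120 — 2 statements merged into one kernel-verified Lean document; each statement's English description precedes it below -/
import Mathlib

section
/- Let G = K_r be the complete graph on r ≥ 2 vertices and let α > 0. The family of moments m_a = Π_{i=1}^r (α)_{a_i} / (rα)_{|a|}, where (x)_k = x(x+1)···(x+k−1) is the rising factorial and |a| = a_1 + ... + a_r, satisfies m_0 = 1 and the recurrence 0 = Σ_{i∈V} Σ_{j≠i} [a_i(a_i−1)/2] m_{a−e_i+e_j} − Σ_{i∈V} Σ_{j≠i} [a_i a_j / 2] m_a + (α/2) Σ_{i∈V} a_i (m_{a−e_i} − r m_a) for every a ∈ ℕ_0^r with a ≠ 0 (terms with a_i = 0 interpreted as zero). -/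
/-!
Adding one unit at vertex `i` multiplies a Dirichlet moment by `(α + b i) / (r α + |b|)`.
Writing `a = b + e_i`, every moment occurring in the `i`-th summand of the recurrence is
therefore `m_b` times an explicit rational factor, and each summand vanishes separately.
-/

open Finset

section
variable {ι : Type*} [Fintype ι]

theorem prod_ascPochhammer_eval_add_single [DecidableEq ι] {R : Type*} [CommSemiring R] (x : R)
    (b : ι → ℕ) (i : ι) :
    ∏ k, (ascPochhammer R ((b + Pi.single i 1 : ι → ℕ) k)).eval x =
      (∏ k, (ascPochhammer R (b k)).eval x) * (x + b i) := by
  rw [Fintype.prod_eq_mul_prod_compl i, Fintype.prod_eq_mul_prod_compl i (fun k => _),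
    mul_right_comm]
  simp only [Pi.add_apply, Pi.single_eq_same, ascPochhammer_succ_eval]
  congr 1
  refine prod_congr rfl fun k hk => ?_
  rw [Pi.single_eq_of_ne (by simpa using hk), add_zero]

noncomputable def dirichletMoment (α : ℝ) (a : ι → ℕ) : ℝ :=
  (∏ i, (ascPochhammer ℝ (a i)).eval α) /
    (ascPochhammer ℝ (∑ i, a i)).eval ((Fintype.card ι : ℝ) * α)

theorem dirichletMoment_zero (α : ℝ) : dirichletMoment α (0 : ι → ℕ) = 1 := by
  simp [dirichletMoment]

theorem dirichletMoment_add_single [DecidableEq ι] (α : ℝ) (b : ι → ℕ) (i : ι) :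
    dirichletMoment α (b + Pi.single i 1) =
      dirichletMoment α b * (α + b i) / (Fintype.card ι * α + ∑ k, (b k : ℝ)) := by
  have hsum : ∑ k, (b + Pi.single i 1 : ι → ℕ) k = ∑ k, b k + 1 := by
    simp [sum_add_distrib]
  rw [dirichletMoment, dirichletMoment, hsum, prod_ascPochhammer_eval_add_single,
    ascPochhammer_succ_eval, mul_div_mul_comm, mul_div_assoc, Nat.cast_sum]

theorem dirichletMoment_vertex_balance [DecidableEq ι] {α : ℝ} (hα : 0 < α) (a : ι → ℕ)
    (i : ι) :
    ∑ j ∈ univ.erase i, (a i : ℝ) * ((a i : ℝ) - 1) / 2 *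
        dirichletMoment α (fun k => a k - (if k = i then 1 else 0) + (if k = j then 1 else 0))
      - ∑ j ∈ univ.erase i, (a i : ℝ) * (a j : ℝ) / 2 * dirichletMoment α a
      + α / 2 * ((a i : ℝ) * (dirichletMoment α (fun k => a k - (if k = i then 1 else 0))
          - Fintype.card ι * dirichletMoment α a)) = 0 := by
  rcases Nat.eq_zero_or_pos (a i) with h0 | hpos
  · simp [h0]
  set b : ι → ℕ := fun k => a k - if k = i then 1 else 0
  have hb_erase : ∀ j ∈ univ.erase i, b j = a j := fun j hj => by simp [b, ne_of_mem_erase hj]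
  have hai : (a i : ℝ) = b i + 1 := by
    have : a i = b i + 1 := by simp [b]; omega
    exact_mod_cast this
  have hshift : ∀ j, (fun k => a k - (if k = i then 1 else 0) + (if k = j then 1 else 0)) =
      b + Pi.single j 1 := fun j => funext fun k => by simp [b, Pi.single_apply]
  have ha : a = b + Pi.single i 1 := funext fun k => by
    by_cases hk : k = i
    · subst hk; simp [b]; omega
    · simp [b, hk]
  set S := ∑ j ∈ univ.erase i, (b j : ℝ)
  have hD : Fintype.card ι * α + ∑ k, (b k : ℝ) = Fintype.card ι * α + b i + S := by
    rw [← add_sum_erase _ _ (mem_univ i), add_assoc]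
  have hma := dirichletMoment_add_single α b i
  rw [← ha] at hma
  set M := dirichletMoment α b
  set D := Fintype.card ι * α + ∑ k, (b k : ℝ)
  have hcard : 0 < Fintype.card ι := Fintype.card_pos_iff.mpr ⟨i⟩
  have hD0 : D ≠ 0 := by rw [hD]; positivity
  have hmoves : ∑ j ∈ univ.erase i, (a i : ℝ) * ((a i : ℝ) - 1) / 2 *
      dirichletMoment α (fun k => a k - (if k = i then 1 else 0) + (if k = j then 1 else 0)) =
      (a i : ℝ) * ((a i : ℝ) - 1) / 2 * (M / D) * ((Fintype.card ι - 1) * α + S) := by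
    calc _ = ∑ j ∈ univ.erase i, (a i : ℝ) * ((a i : ℝ) - 1) / 2 * (M / D) * (α + b j) :=
          sum_congr rfl fun j _ => by rw [hshift j, dirichletMoment_add_single]; ring
      _ = _ := by
        rw [← mul_sum, sum_add_distrib, sum_const, card_erase_of_mem (mem_univ i), card_univ,
          nsmul_eq_mul, Nat.cast_pred hcard]
  have hstays : ∑ j ∈ univ.erase i, (a i : ℝ) * (a j : ℝ) / 2 * dirichletMoment α a =
      (a i : ℝ) / 2 * dirichletMoment α a * S := by
    rw [mul_sum]
    exact sum_congr rfl fun j hj => by rw [← hb_erase j hj]; ring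
  rw [hmoves, hstays, hma, hai]
  field_simp
  rw [hD]
  ring

end

theorem stmt_4_general (r : ℕ) (α : ℝ) (hα : 0 < α)
    (m : (Fin r → ℕ) → ℝ)
    (hm : ∀ a : Fin r → ℕ,
      m a = (∏ i, (ascPochhammer ℝ (a i)).eval α) /
        (ascPochhammer ℝ (∑ i, a i)).eval ((r : ℝ) * α)) :
    m 0 = 1 ∧
    ∀ a : Fin r → ℕ, a ≠ 0 →
      (0 : ℝ) =
        (∑ i : Fin r, ∑ j ∈ Finset.univ.erase i,
          (a i : ℝ) * ((a i : ℝ) - 1) / 2 *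
            m (fun k => a k - (if k = i then 1 else 0) + (if k = j then 1 else 0)))
        - (∑ i : Fin r, ∑ j ∈ Finset.univ.erase i,
            (a i : ℝ) * (a j : ℝ) / 2 * m a)
        + α / 2 * ∑ i : Fin r,
            (a i : ℝ) * (m (fun k => a k - (if k = i then 1 else 0)) - (r : ℝ) * m a) := by
  obtain rfl : m = dirichletMoment α := funext fun a => by
    rw [hm, dirichletMoment, Fintype.card_fin]
  refine ⟨dirichletMoment_zero α, fun a _ => ?_⟩
  rw [mul_sum, ← sum_sub_distrib, ← sum_add_distrib]
  refine (sum_eq_zero fun i _ => ?_).symm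
  simpa using dirichletMoment_vertex_balance hα a i

/-- On the complete graph `K_r` (`r ≥ 2`), the symmetric Dirichlet moments
`m_a = Π_i (α)_{a_i} / (rα)_{|a|}` satisfy `m_0 = 1` and the stationary moment
recurrence with mutation rate `α > 0`. -/
theorem stmt_4 (r : ℕ) (hr : 2 ≤ r) (α : ℝ) (hα : 0 < α)
    (m : (Fin r → ℕ) → ℝ)
    (hm : ∀ a : Fin r → ℕ,
      m a = (∏ i, (ascPochhammer ℝ (a i)).eval α) /
        (ascPochhammer ℝ (∑ i, a i)).eval ((r : ℝ) * α)) :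
    m 0 = 1 ∧
    ∀ a : Fin r → ℕ, a ≠ 0 →
      (0 : ℝ) =
        (∑ i : Fin r, ∑ j ∈ Finset.univ.erase i,
          (a i : ℝ) * ((a i : ℝ) - 1) / 2 *
            m (fun k => a k - (if k = i then 1 else 0) + (if k = j then 1 else 0)))
        - (∑ i : Fin r, ∑ j ∈ Finset.univ.erase i,
            (a i : ℝ) * (a j : ℝ) / 2 * m a)
        + α / 2 * ∑ i : Fin r,
            (a i : ℝ) * (m (fun k => a k - (if k = i then 1 else 0)) - (r : ℝ) * m a) :=
  stmt_4_general r α hα m hm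
end

section
/- Let V_I be a finite index set with |V_I| = m ≥ 1 and let c : V_I → ℝ satisfy Σ_{i∈V_I} c_i = 0. For any integer n ≥ m + 1 and any vector x of indeterminates, Σ_{i∈V_I} c_i Σ_{a: Σ a_k = n−1, a ≥ 1} x^{a} f(n−1, a) evaluated termwise shows: Σ_{a: Σ_{k∈V_I} a_k = n, a_k ≥ 1} f(n,a) Σ_{i∈V_I} a_i(a_i−1) x^{a−e_i} = 0, where f(n,a) = ((n−m) choose (a−1)) · (n choose a) · c^a with (n choose a) = n!/Π_{k∈V_I} a_k! and ((n−m) choose (a−1)) = (n−m)!/Π_{k∈V_I}(a_k−1)!. -/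
/-!
For each `i`, the map `b ↦ b + eᵢ` is a bijection from the positive compositions of `n - 1`
onto the positive compositions of `n` with `aᵢ ≥ 2` (those with `aᵢ = 1` contribute nothing), and
`aᵢ (aᵢ - 1) f(n, b + eᵢ) = cᵢ f(n, b)` because the two factorial denominators absorb `aᵢ - 1`
and `aᵢ`. Hence the `i`-th part of the sum is `cᵢ · G` with `G` independent of `i`, and summing
over `i` gives `(∑ cᵢ) G = 0`.
-/

open Finset

section

variable {V : Type*} [DecidableEq V]

theorem add_single_one_apply (b : V → ℕ) (i k : V) :
    (b + Pi.single i 1 : V → ℕ) k = b k + if k = i then 1 else 0 := by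
  simp [Pi.single_apply]

theorem sub_single_one_apply (a : V → ℕ) (i k : V) :
    (a - Pi.single i 1 : V → ℕ) k = a k - if k = i then 1 else 0 := by
  simp [Pi.single_apply]

theorem sub_single_one_add_single_one {a : V → ℕ} {i : V} (ha : 1 ≤ a i) :
    a - Pi.single i 1 + Pi.single i 1 = a := by
  ext k
  rw [add_single_one_apply, sub_single_one_apply]
  split_ifs with hk
  · subst hk; omega
  · rfl

variable [Fintype V]

theorem Fintype.prod_add_single_one {M : Type*} [CommMonoid M] (f : V → ℕ → M) (b : V → ℕ)
    (i : V) {u : M} (h : f i (b i + 1) = u * f i (b i)) :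
    ∏ k, f k ((b + Pi.single i 1 : V → ℕ) k) = u * ∏ k, f k (b k) := by
  rw [Fintype.prod_eq_mul_prod_compl i, Fintype.prod_eq_mul_prod_compl i (fun k => f k (b k))]
  simp only [Pi.add_apply, Pi.single_eq_same, h, mul_assoc]
  congr 2
  refine Finset.prod_congr rfl fun k hk => ?_
  rw [Pi.single_eq_of_ne (by simpa using hk), add_zero]

variable (V) in
def positiveCompositions (n : ℕ) : Finset (V → ℕ) :=
  (Fintype.piFinset fun _ : V => range (n + 1)).filter (fun a => (∑ k, a k) = n ∧ ∀ k, 1 ≤ a k)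

theorem mem_positiveCompositions {n : ℕ} {a : V → ℕ} :
    a ∈ positiveCompositions V n ↔ (∑ k, a k) = n ∧ ∀ k, 1 ≤ a k := by
  simp only [positiveCompositions, mem_filter, Fintype.mem_piFinset, mem_range,
    and_iff_right_iff_imp]
  rintro ⟨rfl, -⟩ k
  exact Nat.lt_succ_of_le (single_le_sum (fun k _ => Nat.zero_le _) (mem_univ k))

theorem sum_add_single_one (b : V → ℕ) (i : V) :
    ∑ k, (b + Pi.single i 1 : V → ℕ) k = ∑ k, b k + 1 := by
  simp [sum_add_distrib]

theorem sum_positiveCompositions_eq_sum_add_single {M : Type*} [AddCommMonoid M] {n : ℕ} (i : V)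
    (g : (V → ℕ) → M) (hg : ∀ a ∈ positiveCompositions V n, a i = 1 → g a = 0) :
    ∑ a ∈ positiveCompositions V n, g a =
      ∑ b ∈ positiveCompositions V (n - 1), g (b + Pi.single i 1) := by
  rw [← sum_filter_of_ne (p := fun a => 2 ≤ a i) fun a ha hne => ?_]
  · refine (sum_nbij' (· + Pi.single i 1) (· - Pi.single i 1) (fun b hb => ?_) (fun a ha => ?_)
      (fun b _ => by simp) (fun a ha => ?_) fun _ _ => rfl).symm
    · obtain ⟨hsum, hpos⟩ := mem_positiveCompositions.1 hb
      have : 1 ≤ n - 1 :=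
        hsum ▸ (hpos i).trans (single_le_sum (fun k _ => Nat.zero_le _) (mem_univ i))
      refine mem_filter.2 ⟨mem_positiveCompositions.2 ⟨?_, fun k => ?_⟩, ?_⟩
      · rw [sum_add_single_one]; omega
      · rw [add_single_one_apply]; exact (hpos k).trans (Nat.le_add_right _ _)
      · simpa using hpos i
    · obtain ⟨ha, hai : 2 ≤ a i⟩ := mem_filter.1 ha
      obtain ⟨hsum, hpos⟩ := mem_positiveCompositions.1 ha
      refine mem_positiveCompositions.2 ⟨?_, fun k => ?_⟩
      · have := sum_add_single_one (a - Pi.single i 1) i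
        rw [sub_single_one_add_single_one (hpos i), hsum] at this
        omega
      · have := hpos k
        rw [sub_single_one_apply]
        split_ifs with hk
        · subst hk; omega
        · omega
    · exact sub_single_one_add_single_one ((mem_positiveCompositions.1 (mem_filter.1 ha).1).2 i)
  · by_contra hlt
    exact hne (hg a ha (by have := (mem_positiveCompositions.1 ha).2 i; omega))

/-- The coefficient `f(n, a)`. -/
noncomputable def invariantCoeff (m n : ℕ) (c : V → ℝ) (a : V → ℕ) : ℝ :=
  (((n - m).factorial : ℝ) / ∏ k, ((a k - 1).factorial : ℝ)) *
    ((n.factorial : ℝ) / ∏ k, ((a k).factorial : ℝ)) * (∏ k, c k ^ a k)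

theorem invariantCoeff_add_single_mul (m n : ℕ) (c : V → ℝ) {b : V → ℕ} {i : V}
    (hb : 1 ≤ b i) :
    invariantCoeff m n c (b + Pi.single i 1) *
        (((b + Pi.single i 1 : V → ℕ) i : ℝ) * (((b + Pi.single i 1 : V → ℕ) i : ℝ) - 1)) =
      c i * invariantCoeff m n c b := by
  have hfac_pred : ∏ k, (((b + Pi.single i 1 : V → ℕ) k - 1).factorial : ℝ) =
      b i * ∏ k, ((b k - 1).factorial : ℝ) :=
    Fintype.prod_add_single_one (fun _ t => ((t - 1).factorial : ℝ)) b i <| by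
      rw [Nat.add_sub_cancel, ← Nat.mul_factorial_pred (by omega), Nat.cast_mul]
  have hfac : ∏ k, (((b + Pi.single i 1 : V → ℕ) k).factorial : ℝ) =
      (b i + 1) * ∏ k, ((b k).factorial : ℝ) :=
    Fintype.prod_add_single_one (fun _ t => (t.factorial : ℝ)) b i <| by
      rw [Nat.factorial_succ, Nat.cast_mul, Nat.cast_succ]
  have hpow : ∏ k, c k ^ (b + Pi.single i 1 : V → ℕ) k = c i * ∏ k, c k ^ b k :=
    Fintype.prod_add_single_one (fun k t => c k ^ t) b i (pow_succ' _ _)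
  have hbi : (b i : ℝ) ≠ 0 := by positivity
  have hP₁ : ∏ k, ((b k - 1).factorial : ℝ) ≠ 0 := by positivity
  have hP₂ : ∏ k, ((b k).factorial : ℝ) ≠ 0 := by positivity
  rw [invariantCoeff, invariantCoeff, hfac_pred, hfac, hpow]
  simp only [Pi.add_apply, Pi.single_eq_same, Nat.cast_add, Nat.cast_one, add_sub_cancel_right]
  field_simp

theorem sum_invariantCoeff_mul_shifted (m n : ℕ) (c x : V → ℝ) (i : V) :
    ∑ a ∈ positiveCompositions V n, invariantCoeff m n c a *
        ((a i : ℝ) * ((a i : ℝ) - 1) * ∏ k, x k ^ (a k - if k = i then 1 else 0)) =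
      c i * ∑ b ∈ positiveCompositions V (n - 1), invariantCoeff m n c b * ∏ k, x k ^ b k := by
  rw [sum_positiveCompositions_eq_sum_add_single i _ fun a _ hai => by simp [hai], mul_sum]
  refine sum_congr rfl fun b hb => ?_
  have hexp (k : V) : (b + Pi.single i 1 : V → ℕ) k - (if k = i then 1 else 0) = b k := by
    rw [add_single_one_apply, Nat.add_sub_cancel]
  simp only [hexp]
  rw [← mul_assoc, invariantCoeff_add_single_mul m n c ((mem_positiveCompositions.1 hb).2 i),
    mul_assoc]

end

open scoped Classical in
theorem stmt_6_general {V : Type*} [Fintype V] (m : ℕ)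
    (c : V → ℝ) (hc : ∑ i, c i = 0) (n : ℕ) (x : V → ℝ) :
    ∑ a ∈ (Fintype.piFinset fun _ : V => Finset.range (n + 1)).filter
        (fun a => (∑ k, a k) = n ∧ ∀ k, 1 ≤ a k),
      (((n - m).factorial : ℝ) / ∏ k, ((a k - 1).factorial : ℝ)) *
        ((n.factorial : ℝ) / ∏ k, ((a k).factorial : ℝ)) * (∏ k, c k ^ a k) *
        ∑ i, (a i : ℝ) * ((a i : ℝ) - 1) *
          ∏ k, x k ^ (a k - if k = i then 1 else 0)
      = 0 := by
  change ∑ a ∈ positiveCompositions V n, invariantCoeff m n c a * _ = 0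
  simp_rw [mul_sum]
  rw [sum_comm, sum_congr rfl fun i _ => sum_invariantCoeff_mul_shifted m n c x i, ← sum_mul, hc,
    zero_mul]

open scoped Classical in
/-- Algebraic cancellation identity underlying the martingale property of the
invariant polynomials: for a finite index set of size `m`, weights `c` with
`Σ c_i = 0`, `n ≥ m + 1`, and indeterminates `x`,
`Σ_{a : comp. of n into positive parts} f(n,a) Σ_i a_i(a_i−1) x^{a−e_i} = 0`,
where `f(n,a) = ((n−m)!/Π(a_k−1)!) · (n!/Π a_k!) · c^a`. -/
theorem stmt_6 {V : Type*} [Fintype V] (m : ℕ) (hm : Fintype.card V = m) (hm1 : 1 ≤ m)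
    (c : V → ℝ) (hc : ∑ i, c i = 0) (n : ℕ) (hn : m + 1 ≤ n) (x : V → ℝ) :
    ∑ a ∈ (Fintype.piFinset fun _ : V => Finset.range (n + 1)).filter
        (fun a => (∑ k, a k) = n ∧ ∀ k, 1 ≤ a k),
      (((n - m).factorial : ℝ) / ∏ k, ((a k - 1).factorial : ℝ)) *
        ((n.factorial : ℝ) / ∏ k, ((a k).factorial : ℝ)) * (∏ k, c k ^ a k) *
        ∑ i, (a i : ℝ) * ((a i : ℝ) - 1) *
          ∏ k, x k ^ (a k - if k = i then 1 else 0)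
      = 0 :=
  stmt_6_general m c hc n x
end
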